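/- For a complex number A with |A| = 1 and d = −A² − A^{−2} real and nonzero, and assuming d² ≥ 1, let s ≥ 0 with s² = d² − 1. Then the 2×2 complex matrix M = [[A + A^{−1}d^{−1}, A^{−1} s d^{−1}],[A s d^{−1}, −A^{−1} − A d^{−1}]] satisfies M·M* = I, i.e., M is unitary. -/

import Mathlib

theorem stmt19 (A : ℂ) (hA : ‖A‖ = 1) (d : ℝ)
    (hdef : (d : ℂ) = -A ^ 2 - A⁻¹ ^ 2) (hd0 : d ≠ 0) (hd1 : 1 ≤ d ^ 2) :
    let s : ℝ := Real.sqrt (d ^ 2 - 1)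
    let M : Matrix (Fin 2) (Fin 2) ℂ :=
      !![A + A⁻¹ * (d : ℂ)⁻¹, A⁻¹ * (s : ℂ) * (d : ℂ)⁻¹;
         A * (s : ℂ) * (d : ℂ)⁻¹, -A⁻¹ - A * (d : ℂ)⁻¹]
    M * M.conjTranspose = 1 := by
  intro s M
  have hA0 : A ≠ 0 := by intro h; simp [h] at hA
  have h1 : (starRingEnd ℂ) A * A = 1 := by
    rw [mul_comm, Complex.mul_conj, Complex.normSq_eq_norm_sq, hA]; norm_num
  have hconj : (starRingEnd ℂ) A = A⁻¹ := eq_inv_of_mul_eq_one_left h1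
  have hs : (s : ℂ) ^ 2 = (d : ℂ) ^ 2 - 1 := by
    have h2 : s ^ 2 = d ^ 2 - 1 := Real.sq_sqrt (by linarith)
    exact_mod_cast congrArg Complex.ofReal h2
  have hd' : (d : ℂ) ≠ 0 := by exact_mod_cast hd0
  have h3 : A ^ 2 * A⁻¹ ^ 2 = 1 := by field_simp
  have hq : A ^ 4 + A ^ 2 * (d : ℂ) + 1 = 0 := by
    linear_combination A ^ 2 * hdef - h3
  ext i j
  fin_cases i <;> fin_cases j
  · simp [M, Matrix.mul_apply, Fin.sum_univ_two, Matrix.conjTranspose_apply,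
      Matrix.one_apply, map_add, map_mul, map_inv₀, map_neg, Complex.conj_ofReal, hconj]
    field_simp [hA0]
    linear_combination A ^ 2 * hs + (d : ℂ) * hq
  · simp [M, Matrix.mul_apply, Fin.sum_univ_two, Matrix.conjTranspose_apply,
      Matrix.one_apply, map_add, map_mul, map_inv₀, map_neg, Complex.conj_ofReal, hconj]
    field_simp [hA0]
    ring
  · simp [M, Matrix.mul_apply, Fin.sum_univ_two, Matrix.conjTranspose_apply,
      Matrix.one_apply, map_add, map_mul, map_inv₀, map_neg, Complex.conj_ofReal, hconj]
    field_simp [hA0]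
    ring
  · simp [M, Matrix.mul_apply, Fin.sum_univ_two, Matrix.conjTranspose_apply,
      Matrix.one_apply, map_add, map_mul, map_inv₀, map_neg, Complex.conj_ofReal, hconj]
    field_simp [hA0]
    linear_combination A ^ 2 * hs + (d : ℂ) * hq
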